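/- For every even integer n ≥ 4, the wheel graph W_{1,n} satisfies ζ(W_{1,n}) = n(n − 4)/4. -/

import Mathlib

open SimpleGraph

/-- A proper vertex colouring of `G` using exactly `χ(G)` colours. -/
def IsChromaticColoring {V : Type*} (G : SimpleGraph V) (c : V → ℕ) : Prop :=
  (∀ u v, G.Adj u v → c u ≠ c v) ∧ ((Set.range c).ncard : ℕ∞) = G.chromaticNumber

/-- The set of chromatic completion edges for a colouring `c`: unordered pairs of
distinct non-adjacent vertices with different colours. -/
def completionEdges {V : Type*} (G : SimpleGraph V) (c : V → ℕ) : Set (Sym2 V) :=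
  {e | ∃ u v, e = s(u, v) ∧ u ≠ v ∧ ¬ G.Adj u v ∧ c u ≠ c v}

/-- The chromatic completion number `ζ(G)`. -/
noncomputable def zeta {V : Type*} (G : SimpleGraph V) : ℕ :=
  sSup {m | ∃ c : V → ℕ, IsChromaticColoring G c ∧ m = (completionEdges G c).ncard}
/-- The wheel graph `W_{1,n}`: the cycle `C_n` (on the `some` vertices) joined to a
central hub vertex `none` adjacent to every rim vertex. -/
def wheelGraph (n : ℕ) : SimpleGraph (Option (Fin n)) where
  Adj u v := match u, v with
    | none, none => False
    | none, some _ => True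
    | some _, none => True
    | some i, some j => (cycleGraph n).Adj i j
  symm := ⟨by
    intro u v h
    cases u <;> cases v <;> simp_all
    exact ((cycleGraph n).adj_symm h)⟩
  loopless := ⟨by
    intro u h
    cases u with
    | none => exact h
    | some i => exact (cycleGraph n).irrefl h⟩

/-! For even `n ≥ 4` the wheel has chromatic number 3: a triangle hub–`v₀`–`v₁` forces three
colours, and colouring the rim by parity achieves it. In any chromatic colouring the hub has a
colour of its own, so the rim is properly 2-coloured and its colours alternate, i.e. two rim
vertices share a colour iff their indices have the same parity. Every chromatic colouring thus
has the same completion edges: the pairs of rim vertices of opposite parity that are not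
consecutive on the cycle. Each rim vertex has `n / 2` vertices of opposite parity, two of which
are its cycle neighbours, so there are `n (n / 2 - 2) / 2 = n (n - 4) / 4` of them. -/

open Finset

variable {V α β : Type*}

def completionGraph (G : SimpleGraph V) (c : V → α) : SimpleGraph V :=
  Gᶜ ⊓ (⊤ : SimpleGraph α).comap c

@[simp]
lemma completionGraph_adj {G : SimpleGraph V} {c : V → α} {u v : V} :
    (completionGraph G c).Adj u v ↔ u ≠ v ∧ ¬G.Adj u v ∧ c u ≠ c v := by
  simp [completionGraph, and_assoc]

lemma completionEdges_eq_edgeSet (G : SimpleGraph V) (c : V → ℕ) :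
    completionEdges G c = (completionGraph G c).edgeSet := by
  ext e
  induction e using Sym2.ind with
  | _ u v =>
    simp only [completionEdges, Set.mem_ofPred_eq, mem_edgeSet, completionGraph_adj, Sym2.eq_iff]
    constructor
    · rintro ⟨u', v', (⟨rfl, rfl⟩ | ⟨rfl, rfl⟩), h⟩
      · exact h
      · exact ⟨h.1.symm, fun h' => h.2.1 h'.symm, h.2.2.symm⟩
    · exact fun h => ⟨u, v, .inl ⟨rfl, rfl⟩, h⟩

lemma completionGraph_congr (G : SimpleGraph V) {c : V → α} {d : V → β}
    (h : ∀ u v, c u = c v ↔ d u = d v) : completionGraph G c = completionGraph G d := by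
  ext u v
  simp [h]

instance [DecidableEq V] {G : SimpleGraph V} [DecidableRel G.Adj] [DecidableEq α] {c : V → α} :
    DecidableRel (completionGraph G c).Adj :=
  fun _ _ => decidable_of_iff' _ completionGraph_adj

lemma degree_completionGraph_add_degree [Fintype V] [DecidableEq V] {G : SimpleGraph V}
    [DecidableRel G.Adj] [DecidableEq α] {c : V → α}
    (hc : ∀ u v, G.Adj u v → c u ≠ c v) (v : V) :
    (completionGraph G c).degree v + G.degree v = #{u | c u ≠ c v} := by
  have hsub : G.neighborFinset v ⊆ ({u | c u ≠ c v} : Finset V) := fun u hu => by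
    simpa using (hc v u ((mem_neighborFinset _ _ _).mp hu)).symm
  have hcompl : (completionGraph G c).neighborFinset v =
      ({u | c u ≠ c v} : Finset V) \ G.neighborFinset v := by
    ext u
    simp only [mem_neighborFinset, completionGraph_adj, mem_sdiff, mem_filter, mem_univ, true_and]
    exact ⟨fun h => ⟨Ne.symm h.2.2, h.2.1⟩,
      fun h => ⟨fun e => h.1 (e ▸ rfl), h.2, Ne.symm h.1⟩⟩
  rw [← card_neighborFinset_eq_degree, ← card_neighborFinset_eq_degree, hcompl,
    card_sdiff_add_card_eq_card hsub]

lemma zeta_eq_of_forall_ncard_eq {G : SimpleGraph V} {c₀ : V → ℕ}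
    (h₀ : IsChromaticColoring G c₀) {k : ℕ}
    (h : ∀ c, IsChromaticColoring G c → (completionEdges G c).ncard = k) : zeta G = k := by
  have : {m | ∃ c, IsChromaticColoring G c ∧ m = (completionEdges G c).ncard} = {k} := by
    ext m
    simp only [Set.mem_ofPred_eq, Set.mem_singleton_iff]
    constructor
    · rintro ⟨c, hc, rfl⟩
      exact h c hc
    · rintro rfl
      exact ⟨c₀, h₀, (h c₀ h₀).symm⟩
  rw [zeta, this, csSup_singleton]

lemma IsChromaticColoring.exists_mem_apply_eq {G : SimpleGraph V} {c : V → ℕ}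
    (hc : IsChromaticColoring G c) {k : ℕ} (hχ : G.chromaticNumber = k) {s : Finset V}
    (hs : G.IsNClique k s) (v : V) : ∃ x ∈ s, c v = c x := by
  have hcard : (Set.range c).ncard = k := by exact_mod_cast hc.2.trans hχ
  have hfin : (Set.range c).Finite := by
    refine Set.finite_of_ncard_pos (hcard ▸ Nat.pos_of_ne_zero fun hk => ?_)
    exact (chromaticNumber_eq_zero_iff.mp (hk ▸ hχ)).elim v
  have hinj : Set.InjOn c s := fun x hx y hy hxy =>
    by_contra fun hne => hc.1 x y (hs.isClique hx hy hne) hxy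
  have himage : c '' s = Set.range c := by
    refine Set.eq_of_subset_of_ncard_le (Set.image_subset_range _ _) ?_ hfin
    rw [hinj.ncard_image, Set.ncard_coe_finset, hs.card_eq, hcard]
  obtain ⟨x, hx, hxv⟩ : c v ∈ c '' s := himage ▸ ⟨v, rfl⟩
  exact ⟨x, hx, hxv.symm⟩

lemma Function.periodic_two_of_ne_succ {f : ℕ → α} {a b : α} (hf : ∀ k, f (k + 1) ≠ f k)
    (hab : ∀ k, f k = a ∨ f k = b) : Function.Periodic f 2 := fun k => by
  have h1 := hf k
  have h2 := hf (k + 1)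
  rcases hab k with h | h <;> rcases hab (k + 1) with h' | h' <;>
    rcases hab (k + 2) with h'' | h'' <;> simp_all

open Fin.NatCast in
lemma cycleGraph_adj_natCast_succ (n k : ℕ) :
    (cycleGraph (n + 2)).Adj (k : Fin (n + 2)) ((k + 1 : ℕ) : Fin (n + 2)) :=
  cycleGraph_adj.mpr (.inr (by simp))

lemma cycleGraph_adj_zero_one (n : ℕ) : (cycleGraph (n + 2)).Adj 0 1 :=
  cycleGraph_adj.mpr (.inr (by simp))

lemma cycleGraph_adj_mod_two_ne {n : ℕ} (hev : Even n) {u v : Fin n}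
    (h : (cycleGraph n).Adj u v) : u.val % 2 ≠ v.val % 2 := by
  obtain ⟨m, rfl⟩ := hev
  have := Fin.intCast_val_sub_eq_sub_add_ite u v
  have := Fin.intCast_val_sub_eq_sub_add_ite v u
  rcases cycleGraph_adj'.mp h with h | h <;> split_ifs at * <;> omega

open Fin.NatCast in
lemma cycleGraph_apply_eq_iff_mod_two_eq {n : ℕ} {c : Fin (n + 2) → α} {a b : α}
    (hc : ∀ u v, (cycleGraph (n + 2)).Adj u v → c u ≠ c v) (hab : ∀ i, c i = a ∨ c i = b)
    (i j : Fin (n + 2)) : c i = c j ↔ i.val % 2 = j.val % 2 := by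
  -- `f` walks around the cycle indefinitely, since the cast `ℕ → Fin (n + 2)` wraps around.
  set f : ℕ → α := fun k => c k
  have hf : Function.Periodic f 2 := Function.periodic_two_of_ne_succ
    (fun k => (hc _ _ (cycleGraph_adj_natCast_succ n k)).symm) (fun k => hab k)
  have hval (i : Fin (n + 2)) : c i = f (i.val % 2) := by
    rw [hf.map_mod_nat]
    simp [f]
  have h01 : f 0 ≠ f 1 := by simpa [f] using hc _ _ (cycleGraph_adj_natCast_succ n 0)
  rw [hval, hval]
  rcases Nat.mod_two_eq_zero_or_one i.val with hi | hi <;>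
    rcases Nat.mod_two_eq_zero_or_one j.val with hj | hj <;> simp [hi, hj, h01, h01.symm]

@[simp] lemma wheelGraph_adj_none_some {n : ℕ} (i : Fin n) : (wheelGraph n).Adj none (some i) :=
  trivial

@[simp] lemma wheelGraph_adj_some_none {n : ℕ} (i : Fin n) : (wheelGraph n).Adj (some i) none :=
  trivial

@[simp] lemma wheelGraph_adj_some_some {n : ℕ} {i j : Fin n} :
    (wheelGraph n).Adj (some i) (some j) ↔ (cycleGraph n).Adj i j :=
  Iff.rfl

def wheelColoring (n : ℕ) : Option (Fin n) → ℕ := fun v => v.elim 2 (·.val % 2)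

lemma wheelColoring_lt_three {n : ℕ} (v : Option (Fin n)) : wheelColoring n v < 3 := by
  cases v <;> simp [wheelColoring]; omega

lemma wheelColoring_adj_ne {n : ℕ} (hev : Even n) {u v : Option (Fin n)}
    (h : (wheelGraph n).Adj u v) : wheelColoring n u ≠ wheelColoring n v := by
  rcases u with _ | i <;> rcases v with _ | j <;> simp [wheelColoring] at h ⊢
  · omega
  · omega
  · exact cycleGraph_adj_mod_two_ne hev h

lemma wheelGraph_isNClique_three (n : ℕ) :
    (wheelGraph (n + 2)).IsNClique 3 {none, some 0, some 1} :=
  is3Clique_triple_iff.mpr ⟨trivial, trivial, cycleGraph_adj_zero_one n⟩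

lemma wheelGraph_chromaticNumber {n : ℕ} (hn : 2 ≤ n) (hev : Even n) :
    (wheelGraph n).chromaticNumber = 3 := by
  obtain ⟨m, rfl⟩ : ∃ m, n = m + 2 := ⟨n - 2, by omega⟩
  refine le_antisymm ?_ ?_
  · exact Colorable.chromaticNumber_le
      ⟨Coloring.mk (fun v => ⟨wheelColoring _ v, wheelColoring_lt_three v⟩)
        fun h heq => wheelColoring_adj_ne hev h (congrArg Fin.val heq)⟩
  · simpa [(wheelGraph_isNClique_three m).card_eq] using
      (wheelGraph_isNClique_three m).isClique.card_le_chromaticNumber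

lemma wheelColoring_isChromaticColoring {n : ℕ} (hn : 2 ≤ n) (hev : Even n) :
    IsChromaticColoring (wheelGraph n) (wheelColoring n) := by
  refine ⟨fun u v => wheelColoring_adj_ne hev, ?_⟩
  have hrange : Set.range (wheelColoring n) = {2, 0, 1} := by
    ext x
    simp only [wheelColoring, Set.mem_range, Option.exists, Option.elim_none, Option.elim_some,
      Set.mem_insert_iff, Set.mem_singleton_iff]
    constructor
    · rintro (rfl | ⟨i, rfl⟩) <;> omega
    · rintro (rfl | rfl | rfl)
      exacts [.inl rfl, .inr ⟨⟨0, by omega⟩, rfl⟩, .inr ⟨⟨1, by omega⟩, rfl⟩]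
  rw [wheelGraph_chromaticNumber hn hev, hrange]
  norm_num

lemma IsChromaticColoring.wheelGraph_apply_eq_iff {n : ℕ} (hn : 2 ≤ n) (hev : Even n)
    {c : Option (Fin n) → ℕ} (hc : IsChromaticColoring (wheelGraph n) c)
    (u v : Option (Fin n)) :
    c u = c v ↔ wheelColoring n u = wheelColoring n v := by
  obtain ⟨m, rfl⟩ : ∃ m, n = m + 2 := ⟨n - 2, by omega⟩
  have hhub (i : Fin (m + 2)) : c (some i) ≠ c none :=
    (hc.1 _ _ (wheelGraph_adj_none_some i)).symm
  have hrim (i : Fin (m + 2)) : c (some i) = c (some 0) ∨ c (some i) = c (some 1) := by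
    obtain ⟨x, hx, hix⟩ := hc.exists_mem_apply_eq (wheelGraph_chromaticNumber hn hev)
      (wheelGraph_isNClique_three m) (some i)
    simp only [mem_insert, mem_singleton] at hx
    rcases hx with rfl | rfl | rfl
    exacts [absurd hix (hhub i), .inl hix, .inr hix]
  have hcycle := cycleGraph_apply_eq_iff_mod_two_eq (c := c ∘ some)
    (fun i j h => hc.1 _ _ (wheelGraph_adj_some_some.mpr h)) hrim
  rcases u with _ | i <;> rcases v with _ | j <;> simp [wheelColoring, hhub, (hhub _).symm]
  · omega
  · omega
  · exact hcycle i j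

lemma completionGraph_wheelColoring (n : ℕ) :
    completionGraph (wheelGraph n) (wheelColoring n) =
      (completionGraph (cycleGraph n) (·.val % 2)).map (Function.Embedding.some) := by
  ext u v
  rcases u with _ | i <;> rcases v with _ | j <;> simp [wheelColoring, map_adj']

lemma card_filter_mod_two_ne {n : ℕ} (hev : Even n) (r : ℕ) :
    #{j : Fin n | j.val % 2 ≠ r % 2} = n / 2 := by
  have h := Nat.count_modEq_card n (r := 2) (by norm_num) (r + 1)
  rw [Nat.count_eq_card_filter_range, ← Nat.Iio_eq_range, ← Fin.map_valEmbedding_univ,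
    filter_map, card_map, if_neg (by rw [Nat.even_iff.mp hev]; omega), add_zero] at h
  rw [← h]
  congr 1
  ext j
  simp [Nat.ModEq]
  omega

lemma ncard_edgeSet_completionGraph_cycleGraph {n : ℕ} (hn : 4 ≤ n) (hev : Even n) :
    (completionGraph (cycleGraph n) (·.val % 2)).edgeSet.ncard = n * (n - 4) / 4 := by
  obtain ⟨m, rfl⟩ : ∃ m, n = m + 3 := ⟨n - 3, by omega⟩
  have hdeg (i : Fin (m + 3)) :
      (completionGraph (cycleGraph (m + 3)) (·.val % 2)).degree i = (m + 3) / 2 - 2 := by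
    have := degree_completionGraph_add_degree (fun _ _ h => cycleGraph_adj_mod_two_ne hev h) i
    rw [card_filter_mod_two_ne hev, cycleGraph_degree_three_le] at this
    omega
  have hsum := sum_degrees_eq_twice_card_edges (completionGraph (cycleGraph (m + 3)) (·.val % 2))
  simp only [hdeg, sum_const, card_univ, Fintype.card_fin, smul_eq_mul] at hsum
  rw [← coe_edgeFinset, Set.ncard_coe_finset]
  obtain ⟨k, hk⟩ := hev
  rw [show (m + 3) / 2 - 2 = k - 2 by omega, hk] at hsum
  rw [hk, show k + k - 4 = 2 * (k - 2) by omega,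
    show (k + k) * (2 * (k - 2)) = 4 * (k * (k - 2)) by ring, Nat.mul_div_cancel_left _ four_pos]
  linarith

/-- For every even $n ≥ 4$, $ζ(W_{1,n}) = n(n-4)/4$. -/
theorem zeta_wheel_even (n : ℕ) (hn : 4 ≤ n) (hev : Even n) :
    zeta (wheelGraph n) = n * (n - 4) / 4 := by
  refine zeta_eq_of_forall_ncard_eq (wheelColoring_isChromaticColoring (by omega) hev)
    fun c hc => ?_
  rw [completionEdges_eq_edgeSet,
    completionGraph_congr _ (hc.wheelGraph_apply_eq_iff (by omega) hev),
    completionGraph_wheelColoring, edgeSet_map,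
    Set.ncard_image_of_injective _ (Function.Embedding.some).sym2Map.injective,
    ncard_edgeSet_completionGraph_cycleGraph hn hev]
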